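/- arXiv:1202.1352 — 5 statements merged into one kernel-verified Lean document; each statement's English description precedes it below -/
import Mathlib

section
/- Let m ≥ 1 and n ≥ 2m be integers and let X = X(k_0; k_1,…,k_l). For x ∈ J̃(n,m) and y ∈ X, put i_j = #{1 ≤ k ≤ n : x_k = 1 and y_k = (2−j) − k_0/n} for 1 ≤ j ≤ l. Then the squared Euclidean distance satisfies d(x,y)² = 4k_0 + 3m − 4n − k_0²/n + Σ_{j=1}^l j²·k_j + 2·Σ_{j=1}^l (j−1)·i_j. -/
/-!
Because every `x_i ∈ {0, 1}`, `(x_i - y_i)² = y_i² + (1 - 2 y_i) x_i`. The hypothesis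
`∑ k_j = n` forces the level sets `{y = v_j}`, `v_j = (2 - j) - k₀/n`, to partition the
coordinates, so `d(x, y)² = ∑ v_j² k_j + ∑ (1 - 2 v_j) i_j` with `∑ i_j = m`. Expanding
`v_j²` and using `∑ j k_j = 2n - k₀ - m` gives the formula.
-/

noncomputable section

/-- The set of distances between distinct points of `S`. -/
def distSet {n : ℕ} (S : Set (EuclideanSpace ℝ (Fin n))) : Set ℝ :=
  {d | ∃ x ∈ S, ∃ y ∈ S, x ≠ y ∧ d = dist x y}

/-- `S` is an `s`-distance set: exactly `s` distances occur between distinct points. -/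
def IsSDistanceSet {n : ℕ} (s : ℕ) (S : Set (EuclideanSpace ℝ (Fin n))) : Prop :=
  (distSet S).Finite ∧ (distSet S).ncard = s

/-- The representation `J̃(n,m)` of the Johnson graph `J(n,m)`. -/
def JohnsonRep (n m : ℕ) : Set (EuclideanSpace ℝ (Fin n)) :=
  {x | (∀ i, x i = 0 ∨ x i = 1) ∧ {i : Fin n | x i = 1}.ncard = m}

/-- The hyperplane `H(n,m) = {x : ∑ x_i = m}`. -/
def Hyp (n m : ℕ) : Set (EuclideanSpace ℝ (Fin n)) :=
  {x | ∑ i, x i = (m : ℝ)}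

/-- The set `X(k₀; k₁, …, k_l)`: vectors having, for each `1 ≤ j ≤ l`, exactly `k j`
coordinates equal to `(2 - j) - k₀/n`. -/
def XSet (n l : ℕ) (k0 : ℤ) (k : ℕ → ℕ) : Set (EuclideanSpace ℝ (Fin n)) :=
  {y | ∀ j ∈ Finset.Icc 1 l, {i : Fin n | y i = (2 - (j : ℝ)) - (k0 : ℝ) / n}.ncard = k j}

open Finset

theorem sum_eq_card_filter_eq_one {ι : Type*} {x : ι → ℝ} (hx : ∀ i, x i = 0 ∨ x i = 1)
    (t : Finset ι) : ∑ i ∈ t, x i = #{i ∈ t | x i = 1} := by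
  rw [← sum_boole]
  refine sum_congr rfl fun i _ => ?_
  rcases hx i with h | h <;> simp [h]

theorem sq_sub_eq_of_eq_zero_or_eq_one {a : ℝ} (ha : a = 0 ∨ a = 1) (b : ℝ) :
    (a - b) ^ 2 = b ^ 2 + (1 - 2 * b) * a := by
  rcases ha with rfl | rfl <;> ring

section LevelSets

variable {ι : Type*} [Fintype ι] {s : Finset ℕ} {v : ℕ → ℝ} {y : ι → ℝ}

theorem pairwiseDisjoint_levelSets (hv : Set.InjOn v s) :
    (s : Set ℕ).PairwiseDisjoint (fun j => ({i | y i = v j} : Finset ι)) := by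
  intro j hj j' hj' hne
  refine disjoint_filter.2 fun i _ hij hij' => hne (hv hj hj' ?_)
  rw [← hij, ← hij']

theorem biUnion_levelSets_eq_univ [DecidableEq ι] (hv : Set.InjOn v s)
    (hcard : ∑ j ∈ s, #{i | y i = v j} = Fintype.card ι) :
    s.biUnion (fun j => ({i | y i = v j} : Finset ι)) = univ :=
  eq_univ_of_card _ (by rw [card_biUnion (pairwiseDisjoint_levelSets hv), hcard])

theorem sum_eq_sum_sum_levelSets (hv : Set.InjOn v s)
    (hcard : ∑ j ∈ s, #{i | y i = v j} = Fintype.card ι) (f : ι → ℝ) :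
    ∑ i, f i = ∑ j ∈ s, ∑ i with y i = v j, f i := by
  classical
  rw [← sum_biUnion (pairwiseDisjoint_levelSets hv), biUnion_levelSets_eq_univ hv hcard]

variable {x : ι → ℝ}

theorem sum_card_filter_eq_one_inter_levelSets (hx : ∀ i, x i = 0 ∨ x i = 1) (hv : Set.InjOn v s)
    (hcard : ∑ j ∈ s, #{i | y i = v j} = Fintype.card ι) :
    ∑ j ∈ s, (#{i | x i = 1 ∧ y i = v j} : ℝ) = #{i | x i = 1} := by
  rw [← sum_eq_card_filter_eq_one hx, sum_eq_sum_sum_levelSets hv hcard]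
  refine sum_congr rfl fun j _ => ?_
  rw [sum_eq_card_filter_eq_one hx, filter_filter]
  simp only [and_comm]

theorem sum_sq_sub_eq_sum_levelSets (hx : ∀ i, x i = 0 ∨ x i = 1) (hv : Set.InjOn v s)
    (hcard : ∑ j ∈ s, #{i | y i = v j} = Fintype.card ι) :
    ∑ i, (x i - y i) ^ 2 =
      ∑ j ∈ s, (v j ^ 2 * #{i | y i = v j} + (1 - 2 * v j) * #{i | x i = 1 ∧ y i = v j}) := by
  calc ∑ i, (x i - y i) ^ 2
      = ∑ i, (y i ^ 2 + (1 - 2 * y i) * x i) :=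
        sum_congr rfl fun i _ => sq_sub_eq_of_eq_zero_or_eq_one (hx i) (y i)
    _ = ∑ j ∈ s, ∑ i with y i = v j, (v j ^ 2 + (1 - 2 * v j) * x i) := by
        rw [sum_eq_sum_sum_levelSets hv hcard]
        exact sum_congr rfl fun j _ => sum_congr rfl fun i hi => by rw [(mem_filter.1 hi).2]
    _ = _ := by
        refine sum_congr rfl fun j _ => ?_
        rw [sum_add_distrib, sum_const, ← mul_sum, sum_eq_card_filter_eq_one hx, filter_filter,
          nsmul_eq_mul, mul_comm]
        simp only [and_comm]

end LevelSets

theorem div_sq_mul_self (a b : ℝ) : (a / b) ^ 2 * b = a ^ 2 / b := by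
  rcases eq_or_ne b 0 with rfl | hb
  · simp
  · field_simp

theorem sum_sq_mul_add_mul_eq_of_moments (s : Finset ℕ) (n m k0 : ℝ) (k a : ℕ → ℝ)
    (hk : ∑ j ∈ s, k j = n) (hjk : ∑ j ∈ s, j * k j = 2 * n - k0 - m)
    (ha : ∑ j ∈ s, a j = m) :
    ∑ j ∈ s, ((2 - j - k0 / n) ^ 2 * k j + (1 - 2 * (2 - j - k0 / n)) * a j) =
      4 * k0 + 3 * m - 4 * n - k0 ^ 2 / n + ∑ j ∈ s, (j : ℝ) ^ 2 * k j +
        2 * ∑ j ∈ s, ((j : ℝ) - 1) * a j := by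
  set c := k0 / n
  have hexpand : ∑ j ∈ s, ((2 - j - c) ^ 2 * k j + (1 - 2 * (2 - j - c)) * a j) =
      ∑ j ∈ s, (j : ℝ) ^ 2 * k j + 2 * ∑ j ∈ s, ((j : ℝ) - 1) * a j +
        (c - 2) ^ 2 * ∑ j ∈ s, k j + 2 * (c - 2) * ∑ j ∈ s, j * k j +
        (2 * c - 1) * ∑ j ∈ s, a j := by
    simp only [mul_sum, ← sum_add_distrib]
    exact sum_congr rfl fun j _ => by ring
  rw [hexpand, hk, hjk, ha]
  linear_combination div_sq_mul_self k0 n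

theorem dist_sq_formula_general (n m l : ℕ) (k0 : ℤ) (k : ℕ → ℕ)
    (hsum : (∑ j ∈ Finset.Icc 1 l, k j) = n)
    (hwsum : (∑ j ∈ Finset.Icc 1 l, (j : ℤ) * (k j : ℤ)) = 2 * n - k0 - m)
    (x : EuclideanSpace ℝ (Fin n)) (hx : x ∈ JohnsonRep n m)
    (y : EuclideanSpace ℝ (Fin n)) (hy : y ∈ XSet n l k0 k) :
    dist x y ^ 2 =
      4 * (k0 : ℝ) + 3 * m - 4 * n - (k0 : ℝ) ^ 2 / n +
        (∑ j ∈ Finset.Icc 1 l, (j : ℝ) ^ 2 * (k j : ℝ)) +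
        2 * ∑ j ∈ Finset.Icc 1 l, ((j : ℝ) - 1) *
          ({i : Fin n | x i = 1 ∧ y i = (2 - (j : ℝ)) - (k0 : ℝ) / n}.ncard : ℝ) := by
  obtain ⟨hx01, hxm⟩ := hx
  set v : ℕ → ℝ := fun j => (2 - j) - k0 / n
  have hv : Set.InjOn v (Icc 1 l) := fun j _ j' _ h => by
    simpa using (show (j : ℝ) = j' by simpa [v] using h)
  have hk : ∀ j ∈ Icc 1 l, #{i | y i = v j} = k j := fun j hj => by
    rw [← hy j hj, ← Set.ncard_coe_finset, coe_filter_univ]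
  have hcard : ∑ j ∈ Icc 1 l, #{i | y i = v j} = Fintype.card (Fin n) := by
    rw [sum_congr rfl hk, hsum, Fintype.card_fin]
  have hm : ∑ j ∈ Icc 1 l, (#{i | x i = 1 ∧ y i = v j} : ℝ) = m := by
    rw [sum_card_filter_eq_one_inter_levelSets hx01 hv hcard, ← hxm, ← Set.ncard_coe_finset, coe_filter_univ]
  rw [EuclideanSpace.dist_sq_eq]
  simp_rw [Real.dist_eq, sq_abs, sum_sq_sub_eq_sum_levelSets hx01 hv hcard, ← coe_filter_univ,
    Set.ncard_coe_finset]
  refine (sum_congr rfl fun j hj => ?_).trans (sum_sq_mul_add_mul_eq_of_moments _ _ _ _ _ _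
    (by exact_mod_cast hsum) (by exact_mod_cast hwsum) hm)
  rw [hk j hj]

theorem dist_sq_formula (n m l : ℕ) (hm : 1 ≤ m) (hn : 2 * m ≤ n)
    (hl1 : 1 ≤ l) (hlm : l ≤ m) (k0 : ℤ) (k : ℕ → ℕ)
    (hsum : (∑ j ∈ Finset.Icc 1 l, k j) = n)
    (hwsum : (∑ j ∈ Finset.Icc 1 l, (j : ℤ) * (k j : ℤ)) = 2 * n - k0 - m)
    (x : EuclideanSpace ℝ (Fin n)) (hx : x ∈ JohnsonRep n m)
    (y : EuclideanSpace ℝ (Fin n)) (hy : y ∈ XSet n l k0 k) :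
    dist x y ^ 2 =
      4 * (k0 : ℝ) + 3 * m - 4 * n - (k0 : ℝ) ^ 2 / n +
        (∑ j ∈ Finset.Icc 1 l, (j : ℝ) ^ 2 * (k j : ℝ)) +
        2 * ∑ j ∈ Finset.Icc 1 l, ((j : ℝ) - 1) *
          ({i : Fin n | x i = 1 ∧ y i = (2 - (j : ℝ)) - (k0 : ℝ) / n}.ncard : ℝ) :=
  dist_sq_formula_general n m l k0 k hsum hwsum x hx y hy
end
end

section
/- Let m ≥ 1 and n ≥ 2m be integers, let l ≥ 3, and let X = X(k_0; k_1,…,k_l) with k_1 ≥ 1 and k_l ≥ 1. Define k_1' = k_1 − 1, k_l' = k_l − 1, and: if l > 3, k_2' = k_2 + 1, k_{l−1}' = k_{l−1} + 1, and k_j' = k_j for 3 ≤ j ≤ l−2; if l = 3, k_2' = k_2 + 2. Then the nonnegative integers k_1',…,k_l' again satisfy Σ_{j=1}^l k_j' = n and Σ_{j=1}^l j·k_j' = 2n − k_0 − m, and for X' = X(k_0; k_1',…,k_l') the difference M_X − M_{X'} is a positive even integer; in particular M_X > M_{X'}, and if M_X is an even integer then so is M_{X'}. -/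
noncomputable section

/-!
Write `c j = (2 - j) - k₀/n`. A point `y ∈ X` has `y i = c 1 - w i` with integer depths
`0 ≤ w i ≤ l - 1`, and `#{i | t ≤ w i} = k (t+1) + ⋯ + k l`. For the indicator vector `x` of an
`m`-set `S`,
  `d(x, y)² = ∑ y i² + m - 2 m c 1 + 2 ∑_{i ∈ S} w i`,
and `∑_{i ∈ S} w i = ∑_{t ≥ 1} #{i ∈ S | t ≤ w i}` is maximised by any `S` that is upward closed
for `w`, giving
  `M_X = ∑ j, k j c j² + m - 2 m c 1 + 2 ∑_{t=1}^{l-1} min m (k (t+1) + ⋯ + k l)`.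
Passing from `k` to `k'` lowers `∑ j, k j c j²` by exactly `2l - 4`, and only changes the first and
the last suffix sum, by `+1` and `-1`; as `1 ≤ k l ≤ k 2 + ⋯ + k l`, the sum of minima cannot
grow. So `M_X - M_{X'}` is twice an integer that is at least `l - 2 > 0`.
-/

open Finset

theorem Finset.sum_eq_sum_card_filter_le {ι : Type*} (S : Finset ι) (w : ι → ℕ) {N : ℕ}
    (hw : ∀ i ∈ S, w i ≤ N) : ∑ i ∈ S, w i = ∑ t ∈ Icc 1 N, #{i ∈ S | t ≤ w i} := by
  simp_rw [card_filter]
  rw [sum_comm]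
  refine sum_congr rfl fun i hi => ?_
  rw [← card_filter, show {t ∈ Icc 1 N | t ≤ w i} = Icc 1 (w i) by
    ext t; simp only [mem_filter, mem_Icc]; have := hw i hi; omega]
  simp

section TopSum

variable {ι : Type*} [Fintype ι] [DecidableEq ι] {w : ι → ℕ}

theorem card_filter_le_eq_min_of_forall_le {S : Finset ι} (hS : ∀ i ∈ S, ∀ i' ∉ S, w i' ≤ w i)
    (t : ℕ) :
    #{i ∈ S | t ≤ w i} = min #S #{i | t ≤ w i} := by
  by_cases h : ∃ i' ∉ S, t ≤ w i'
  · obtain ⟨i', hi', ht⟩ := h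
    have hall : ∀ i ∈ S, t ≤ w i := fun i hi => ht.trans (hS i hi i' hi')
    rw [filter_true_of_mem hall, min_eq_left]
    exact card_le_card fun i hi => mem_filter.2 ⟨mem_univ i, hall i hi⟩
  · push Not at h
    have hsub : ({i | t ≤ w i} : Finset ι) ⊆ S := fun i hi => by
      by_contra hiS
      exact (h i hiS).not_ge (mem_filter.1 hi).2
    rw [show S.filter (t ≤ w ·) = univ.filter (t ≤ w ·) by
      ext i; simp only [mem_filter, mem_univ, true_and, and_iff_right_iff_imp]
      exact fun hi => hsub (mem_filter.2 ⟨mem_univ i, hi⟩), min_eq_right (card_le_card hsub)]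

theorem exists_card_eq_forall_le (w : ι → ℕ) {m : ℕ} (hm : m ≤ Fintype.card ι) :
    ∃ S : Finset ι, #S = m ∧ ∀ i ∈ S, ∀ i' ∉ S, w i' ≤ w i := by
  -- a maximiser of `∑ i ∈ S, w i`; swapping `i ∈ S` for a heavier `i' ∉ S` would increase it
  obtain ⟨S, hS, hmax⟩ := exists_max_image (powersetCard m univ) (fun S => ∑ i ∈ S, w i)
    (powersetCard_nonempty.2 (by simpa using hm))
  rw [mem_powersetCard_univ] at hS
  refine ⟨S, hS, fun i hi i' hi' => ?_⟩
  by_contra! hlt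
  have hi'S : i' ∉ S.erase i := fun h => hi' (mem_of_mem_erase h)
  have hcard : #(insert i' (S.erase i)) = m := by
    rw [card_insert_of_notMem hi'S, card_erase_of_mem hi, hS]
    have : 0 < m := hS ▸ card_pos.2 ⟨i, hi⟩
    omega
  have := hmax _ (mem_powersetCard_univ.2 hcard)
  rw [sum_insert hi'S, ← sum_erase_add S w hi] at this
  omega

theorem isGreatest_sum_of_card_eq (w : ι → ℕ) {m N : ℕ} (hm : m ≤ Fintype.card ι)
    (hw : ∀ i, w i ≤ N) :
    IsGreatest {s | ∃ S : Finset ι, #S = m ∧ s = ∑ i ∈ S, w i}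
      (∑ t ∈ Icc 1 N, min m #{i | t ≤ w i}) := by
  refine ⟨?_, ?_⟩
  · obtain ⟨S, hS, hup⟩ := exists_card_eq_forall_le w hm
    refine ⟨S, hS, ?_⟩
    rw [S.sum_eq_sum_card_filter_le w fun i _ => hw i]
    simp_rw [card_filter_le_eq_min_of_forall_le hup, hS]
  · rintro _ ⟨S, rfl, rfl⟩
    rw [S.sum_eq_sum_card_filter_le w fun i _ => hw i]
    exact sum_le_sum fun t _ => le_min (card_filter_le _ _)
      (card_le_card (filter_subset_filter _ (subset_univ S)))

end TopSum

def indicatorVec {n : ℕ} (S : Finset (Fin n)) : EuclideanSpace ℝ (Fin n) :=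
  WithLp.toLp 2 fun i => if i ∈ S then 1 else 0

lemma mem_johnsonRep_iff {n m : ℕ} {x : EuclideanSpace ℝ (Fin n)} :
    x ∈ JohnsonRep n m ↔ ∃ S : Finset (Fin n), #S = m ∧ indicatorVec S = x := by
  constructor
  · rintro ⟨h01, hcard⟩
    refine ⟨univ.filter (x · = 1), ?_, ?_⟩
    · rw [← hcard, ← Set.ncard_coe_finset]
      congr 1
      ext i
      simp
    · ext i
      rcases h01 i with h | h <;> simp [indicatorVec, h]
  · rintro ⟨S, rfl, rfl⟩
    refine ⟨fun i => by by_cases h : i ∈ S <;> simp [indicatorVec, h], ?_⟩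
    rw [← Set.ncard_coe_finset]
    congr 1
    ext i
    by_cases h : i ∈ S <;> simp [indicatorVec, h]

lemma dist_indicatorVec_sq {n : ℕ} (S : Finset (Fin n)) (y : EuclideanSpace ℝ (Fin n)) :
    dist (indicatorVec S) y ^ 2 = ∑ i, y i ^ 2 + #S - 2 * ∑ i ∈ S, y i := by
  have hpt : ∀ i, (indicatorVec S i - y i) ^ 2
      = y i ^ 2 + if i ∈ S then 1 - 2 * y i else 0 := fun i => by
    by_cases h : i ∈ S
    · simp only [indicatorVec, h, ↓reduceIte]
      ring
    · simp [indicatorVec, h]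
  rw [EuclideanSpace.dist_eq, Real.sq_sqrt (by positivity)]
  simp_rw [Real.dist_eq, sq_abs, hpt, sum_add_distrib, sum_ite_mem, univ_inter, sum_sub_distrib,
    ← mul_sum]
  simp only [sum_const, nsmul_eq_mul, mul_one]
  ring

def xCoord (n : ℕ) (k0 : ℤ) (j : ℕ) : ℝ := (2 - (j : ℝ)) - (k0 : ℝ) / n

lemma xCoord_one_sub (n : ℕ) (k0 : ℤ) (j : ℕ) : xCoord n k0 1 - xCoord n k0 j = j - 1 := by
  unfold xCoord; push_cast; ring

lemma xCoord_injective (n : ℕ) (k0 : ℤ) : Function.Injective (xCoord n k0) := fun j j' h => by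
  have := (xCoord_one_sub n k0 j).symm.trans (h ▸ xCoord_one_sub n k0 j')
  exact_mod_cast sub_left_injective this

def levelSet {n : ℕ} (k0 : ℤ) (y : EuclideanSpace ℝ (Fin n)) (j : ℕ) : Finset (Fin n) :=
  {i | y i = xCoord n k0 j}

lemma pairwiseDisjoint_levelSet {n : ℕ} (k0 : ℤ) (y : EuclideanSpace ℝ (Fin n)) {s : Set ℕ} :
    s.PairwiseDisjoint (levelSet k0 y) := fun _ _ _ _ hne =>
  disjoint_filter.2 fun _ _ hj hj' => hne (xCoord_injective n k0 (hj.symm.trans hj'))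

lemma floor_xCoord_one_sub {n : ℕ} {k0 : ℤ} {j : ℕ} (hj : 1 ≤ j) :
    ⌊xCoord n k0 1 - xCoord n k0 j⌋₊ = j - 1 := by
  rw [xCoord_one_sub, ← Nat.cast_one, ← Nat.cast_sub hj, Nat.floor_natCast]

def xDepth {n : ℕ} (k0 : ℤ) (y : EuclideanSpace ℝ (Fin n)) (i : Fin n) : ℕ :=
  ⌊xCoord n k0 1 - y i⌋₊

def greedyValue (m l : ℕ) (k : ℕ → ℕ) : ℕ :=
  ∑ t ∈ Icc 1 (l - 1), min m (∑ j ∈ Icc (t + 1) l, k j)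

def maxDistSq (n m l : ℕ) (k0 : ℤ) (k : ℕ → ℕ) : ℝ :=
  ∑ j ∈ Icc 1 l, xCoord n k0 j ^ 2 * k j + m - 2 * m * xCoord n k0 1 + 2 * greedyValue m l k

section XSet

variable {n l : ℕ} {k0 : ℤ} {k : ℕ → ℕ} {y : EuclideanSpace ℝ (Fin n)}

lemma card_levelSet (hy : y ∈ XSet n l k0 k) {j : ℕ} (hj : j ∈ Icc 1 l) :
    #(levelSet k0 y j) = k j := by
  rw [← hy j hj, ← Set.ncard_coe_finset]
  congr 1
  ext i
  rw [mem_coe, levelSet, mem_filter]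
  simp [xCoord]

lemma biUnion_levelSet (hy : y ∈ XSet n l k0 k) (hsum : ∑ j ∈ Icc 1 l, k j = n) :
    (Icc 1 l).biUnion (levelSet k0 y) = univ := by
  apply eq_univ_of_card
  rw [card_biUnion (pairwiseDisjoint_levelSet k0 y), sum_congr rfl fun j hj => card_levelSet hy hj,
    hsum, Fintype.card_fin]

lemma exists_eq_xCoord (hy : y ∈ XSet n l k0 k) (hsum : ∑ j ∈ Icc 1 l, k j = n) (i : Fin n) :
    ∃ j ∈ Icc 1 l, y i = xCoord n k0 j := by
  obtain ⟨j, hj, hi⟩ := mem_biUnion.1 ((biUnion_levelSet hy hsum).symm ▸ mem_univ i)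
  exact ⟨j, hj, (mem_filter.1 hi).2⟩

lemma sum_comp_of_mem_XSet {M : Type*} [AddCommMonoid M] (hy : y ∈ XSet n l k0 k)
    (hsum : ∑ j ∈ Icc 1 l, k j = n) (g : ℝ → M) :
    ∑ i, g (y i) = ∑ j ∈ Icc 1 l, k j • g (xCoord n k0 j) := by
  rw [← biUnion_levelSet hy hsum, sum_biUnion (pairwiseDisjoint_levelSet k0 y)]
  refine sum_congr rfl fun j hj => ?_
  calc ∑ i ∈ levelSet k0 y j, g (y i) = ∑ i ∈ levelSet k0 y j, g (xCoord n k0 j) :=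
        sum_congr rfl fun i hi => congrArg g (mem_filter.1 hi).2
    _ = k j • g (xCoord n k0 j) := by rw [sum_const, card_levelSet hy hj]

lemma natCast_xDepth (hy : y ∈ XSet n l k0 k) (hsum : ∑ j ∈ Icc 1 l, k j = n) (i : Fin n) :
    (xDepth k0 y i : ℝ) = xCoord n k0 1 - y i := by
  obtain ⟨j, hj, hyi⟩ := exists_eq_xCoord hy hsum i
  rw [xDepth, hyi, floor_xCoord_one_sub (mem_Icc.1 hj).1, xCoord_one_sub,
    Nat.cast_sub (mem_Icc.1 hj).1, Nat.cast_one]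

lemma xDepth_le (hy : y ∈ XSet n l k0 k) (hsum : ∑ j ∈ Icc 1 l, k j = n) (i : Fin n) :
    xDepth k0 y i ≤ l - 1 := by
  obtain ⟨j, hj, hyi⟩ := exists_eq_xCoord hy hsum i
  rw [xDepth, hyi, floor_xCoord_one_sub (mem_Icc.1 hj).1]
  exact Nat.sub_le_sub_right (mem_Icc.1 hj).2 1

lemma card_le_xDepth (hy : y ∈ XSet n l k0 k) (hsum : ∑ j ∈ Icc 1 l, k j = n) (t : ℕ) :
    #{i | t ≤ xDepth k0 y i} = ∑ j ∈ Icc (t + 1) l, k j := by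
  rw [card_filter]
  refine (sum_comp_of_mem_XSet hy hsum fun v => if t ≤ ⌊xCoord n k0 1 - v⌋₊ then 1 else 0).trans ?_
  rw [show Icc (t + 1) l = {j ∈ Icc 1 l | t ≤ j - 1} by
      ext j; simp only [mem_Icc, mem_filter]; omega,
    sum_filter]
  refine sum_congr rfl fun j hj => ?_
  rw [floor_xCoord_one_sub (mem_Icc.1 hj).1]
  split_ifs <;> simp

lemma isGreatest_dist_sq {m : ℕ} (hmn : m ≤ n) (hy : y ∈ XSet n l k0 k)
    (hsum : ∑ j ∈ Icc 1 l, k j = n) :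
    IsGreatest {d | ∃ x ∈ JohnsonRep n m, d = dist x y ^ 2} (maxDistSq n m l k0 k) := by
  have hdist : ∀ S : Finset (Fin n), #S = m → dist (indicatorVec S) y ^ 2
      = maxDistSq n m l k0 k - 2 * greedyValue m l k + 2 * (∑ i ∈ S, xDepth k0 y i : ℕ) := by
    intro S hS
    have hsq : ∑ i, y i ^ 2 = ∑ j ∈ Icc 1 l, xCoord n k0 j ^ 2 * k j := by
      simp [sum_comp_of_mem_XSet hy hsum (· ^ 2), mul_comm]
    have hlin : ∑ i ∈ S, y i = m * xCoord n k0 1 - (∑ i ∈ S, xDepth k0 y i : ℕ) := by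
      simp [natCast_xDepth hy hsum, hS]
    rw [dist_indicatorVec_sq, hsq, hlin, hS, maxDistSq]
    ring
  obtain ⟨⟨S, hS, hSw⟩, hub⟩ := isGreatest_sum_of_card_eq (xDepth k0 y) (N := l - 1)
    (by simpa using hmn) (xDepth_le hy hsum)
  simp_rw [card_le_xDepth hy hsum] at hSw hub
  rw [← greedyValue] at hSw hub
  refine ⟨⟨indicatorVec S, mem_johnsonRep_iff.2 ⟨S, hS, rfl⟩, ?_⟩, ?_⟩
  · rw [hdist S hS, ← hSw]
    ring
  · rintro _ ⟨x, hx, rfl⟩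
    obtain ⟨T, hT, rfl⟩ := mem_johnsonRep_iff.1 hx
    have : ((∑ i ∈ T, xDepth k0 y i : ℕ) : ℝ) ≤ greedyValue m l k := by
      exact_mod_cast hub ⟨T, hT, rfl⟩
    rw [hdist T hT]
    linarith

end XSet

lemma eq_maxDistSq_of_isGreatest {n m l : ℕ} {k0 : ℤ} {k : ℕ → ℕ} (hmn : m ≤ n)
    (hsum : ∑ j ∈ Icc 1 l, k j = n) {M : ℝ}
    (hM : IsGreatest {d | ∃ x ∈ JohnsonRep n m, ∃ y ∈ XSet n l k0 k, d = dist x y ^ 2} M) :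
    M = maxDistSq n m l k0 k := by
  obtain ⟨x, hx, y, hy, rfl⟩ := hM.1
  have hmax := isGreatest_dist_sq hmn hy hsum
  refine le_antisymm (hmax.2 ⟨x, hx, rfl⟩) ?_
  obtain ⟨x', hx', hx'y⟩ := hmax.1
  exact hx'y ▸ hM.2 ⟨x', hx', y, hy, rfl⟩

-- `k' = k + e₂ + e_{l-1} - e₁ - e_l`; for `l = 3` both unit vectors added are `e₂`.
def descentShift (l j : ℕ) : ℤ :=
  (if j = 2 then 1 else 0) + (if j = l - 1 then 1 else 0) - (if j = 1 then 1 else 0)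
    - (if j = l then 1 else 0)

lemma eq_add_descentShift {l : ℕ} {k k' : ℕ → ℕ} (hl : 3 ≤ l) (hk1 : 1 ≤ k 1) (hkl : 1 ≤ k l)
    (hk'1 : k' 1 = k 1 - 1) (hk'l : k' l = k l - 1) (hcase3 : l = 3 → k' 2 = k 2 + 2)
    (hcase : 3 < l → k' 2 = k 2 + 1 ∧ k' (l - 1) = k (l - 1) + 1 ∧
      ∀ j, 3 ≤ j → j ≤ l - 2 → k' j = k j) :
    ∀ j ∈ Icc 1 l, (k' j : ℤ) = k j + descentShift l j := by
  intro j hj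
  rw [mem_Icc] at hj
  unfold descentShift
  rcases hl.eq_or_lt with rfl | hl4
  · have := hcase3 rfl
    obtain rfl | rfl | rfl : j = 1 ∨ j = 2 ∨ j = 3 := by omega
    all_goals split_ifs <;> omega
  · obtain ⟨hk'2, hk'l1, hmid⟩ := hcase hl4
    by_cases hj' : 3 ≤ j ∧ j ≤ l - 2
    · have := hmid j hj'.1 hj'.2
      split_ifs <;> omega
    · obtain rfl | rfl | rfl | rfl : j = 1 ∨ j = 2 ∨ j = l - 1 ∨ j = l := by omega
      all_goals split_ifs <;> omega

section Descent

variable {l : ℕ} {k k' : ℕ → ℕ} (hk' : ∀ j ∈ Icc 1 l, (k' j : ℤ) = k j + descentShift l j)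
include hk'

lemma sum_mul_descent {R : Type*} [CommRing R] {s : Finset ℕ} (hs : s ⊆ Icc 1 l) (f : ℕ → R) :
    ∑ j ∈ s, f j * k' j = ∑ j ∈ s, f j * k j + ((if 2 ∈ s then f 2 else 0)
      + (if l - 1 ∈ s then f (l - 1) else 0) - (if 1 ∈ s then f 1 else 0)
      - (if l ∈ s then f l else 0)) := by
  have hcast : ∀ j ∈ s, (k' j : R) = k j + descentShift l j := fun j hj => by
    exact_mod_cast congrArg (Int.cast : ℤ → R) (hk' j (hs hj))
  rw [sum_congr rfl fun j hj => by rw [hcast j hj]]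
  simp [descentShift, mul_add, mul_sub, sum_add_distrib, sum_sub_distrib, sum_ite_eq']

lemma sum_Icc_succ_descent {t : ℕ} (ht : t ∈ Icc 1 (l - 1)) :
    ((∑ j ∈ Icc (t + 1) l, k' j : ℕ) : ℤ)
      = ((∑ j ∈ Icc (t + 1) l, k j : ℕ) : ℤ) + (if t = 1 then 1 else 0)
        - (if t = l - 1 then 1 else 0) := by
  rw [mem_Icc] at ht
  have := sum_mul_descent hk' (Icc_subset_Icc (by omega) le_rfl) (s := Icc (t + 1) l)
    (fun _ => (1 : ℤ))
  simp only [one_mul, mem_Icc] at this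
  push_cast
  rw [this]
  split_ifs <;> omega

variable (hl : 3 ≤ l)
include hl

lemma sum_Icc_mul_descent {R : Type*} [CommRing R] (f : ℕ → R) :
    ∑ j ∈ Icc 1 l, f j * k' j = ∑ j ∈ Icc 1 l, f j * k j + (f 2 + f (l - 1) - f 1 - f l) := by
  rw [sum_mul_descent hk' subset_rfl]
  simp only [mem_Icc]
  rw [if_pos (by omega), if_pos (by omega), if_pos (by omega), if_pos (by omega)]

lemma sum_descent : ∑ j ∈ Icc 1 l, k' j = ∑ j ∈ Icc 1 l, k j := by
  have := sum_Icc_mul_descent hk' hl (fun _ => (1 : ℤ))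
  simp only [one_mul, add_sub_cancel_right, sub_self, add_zero] at this
  exact_mod_cast this

lemma sum_id_mul_descent :
    ∑ j ∈ Icc 1 l, (j : ℤ) * k' j = ∑ j ∈ Icc 1 l, (j : ℤ) * k j := by
  rw [sum_Icc_mul_descent hk' hl, Nat.cast_sub (by omega : 1 ≤ l)]
  ring

lemma sum_xCoord_sq_mul_descent (n : ℕ) (k0 : ℤ) :
    ∑ j ∈ Icc 1 l, xCoord n k0 j ^ 2 * k' j
      = ∑ j ∈ Icc 1 l, xCoord n k0 j ^ 2 * k j - (2 * l - 4) := by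
  rw [sum_Icc_mul_descent hk' hl]
  simp only [xCoord, Nat.cast_sub (by omega : 1 ≤ l)]
  push_cast
  ring

lemma greedyValue_descent_le (m : ℕ) : greedyValue m l k' ≤ greedyValue m l k := by
  set A : (ℕ → ℕ) → ℕ → ℕ := fun k t => ∑ j ∈ Icc (t + 1) l, k j
  have hshift : ∀ t ∈ Icc 1 (l - 1), (A k' t : ℤ)
      = A k t + (if t = 1 then 1 else 0) - (if t = l - 1 then 1 else 0) :=
    fun t ht => sum_Icc_succ_descent hk' ht
  have h1 : 1 ∈ Icc 1 (l - 1) := mem_Icc.2 ⟨le_rfl, by omega⟩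
  have hlast : l - 1 ∈ (Icc 1 (l - 1)).erase 1 :=
    mem_erase.2 ⟨by omega, mem_Icc.2 ⟨by omega, le_rfl⟩⟩
  have hrest : ∑ t ∈ ((Icc 1 (l - 1)).erase 1).erase (l - 1), min m (A k' t)
      = ∑ t ∈ ((Icc 1 (l - 1)).erase 1).erase (l - 1), min m (A k t) := by
    refine sum_congr rfl fun t ht => ?_
    rw [mem_erase, mem_erase] at ht
    have := hshift t ht.2.2
    rw [if_neg ht.2.1, if_neg ht.1] at this
    omega
  have hsub : A k (l - 1) ≤ A k 1 :=
    sum_le_sum_of_subset (Icc_subset_Icc (by omega) le_rfl)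
  have hfirst := hshift 1 h1
  have hlast' := hshift (l - 1) (mem_of_mem_erase hlast)
  rw [if_pos rfl, if_neg (by omega)] at hfirst
  rw [if_neg (by omega), if_pos rfl] at hlast'
  unfold greedyValue
  rw [← add_sum_erase _ (fun t => min m (A k' t)) h1, ← add_sum_erase _ _ hlast, hrest,
    ← add_sum_erase _ (fun t => min m (A k t)) h1, ← add_sum_erase _ _ hlast]
  omega

lemma maxDistSq_sub_descent (n m : ℕ) (k0 : ℤ) :
    maxDistSq n m l k0 k - maxDistSq n m l k0 k'
      = 2 * ((l : ℝ) - 2) + 2 * ((greedyValue m l k : ℝ) - greedyValue m l k') := by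
  rw [maxDistSq, maxDistSq, sum_xCoord_sq_mul_descent hk' hl]
  ring

end Descent

theorem MX_descent_general (n m l : ℕ) (hn : 2 * m ≤ n)
    (hl : 3 ≤ l) (k0 : ℤ) (k : ℕ → ℕ)
    (hsum : (∑ j ∈ Finset.Icc 1 l, k j) = n)
    (hwsum : (∑ j ∈ Finset.Icc 1 l, (j : ℤ) * (k j : ℤ)) = 2 * n - k0 - m)
    (hk1 : 1 ≤ k 1) (hkl : 1 ≤ k l)
    (k' : ℕ → ℕ)
    (hk'1 : k' 1 = k 1 - 1) (hk'l : k' l = k l - 1)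
    (hcase3 : l = 3 → k' 2 = k 2 + 2)
    (hcase : 3 < l → k' 2 = k 2 + 1 ∧ k' (l - 1) = k (l - 1) + 1 ∧
      ∀ j, 3 ≤ j → j ≤ l - 2 → k' j = k j)
    (MX MX' : ℝ)
    (hMX : IsGreatest
      {d : ℝ | ∃ x ∈ JohnsonRep n m, ∃ y ∈ XSet n l k0 k, d = dist x y ^ 2} MX)
    (hMX' : IsGreatest
      {d : ℝ | ∃ x ∈ JohnsonRep n m, ∃ y ∈ XSet n l k0 k', d = dist x y ^ 2} MX') :
    (∑ j ∈ Finset.Icc 1 l, k' j) = n ∧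
    (∑ j ∈ Finset.Icc 1 l, (j : ℤ) * (k' j : ℤ)) = 2 * n - k0 - m ∧
    (∃ t : ℤ, Even t ∧ 0 < t ∧ MX - MX' = (t : ℝ)) ∧
    MX' < MX ∧
    ((∃ t : ℤ, Even t ∧ MX = (t : ℝ)) → (∃ t : ℤ, Even t ∧ MX' = (t : ℝ))) := by
  have hk' := eq_add_descentShift hl hk1 hkl hk'1 hk'l hcase3 hcase
  have hsum' := (sum_descent hk' hl).trans hsum
  have hmn : m ≤ n := by omega
  set d : ℤ := l - 2 + (greedyValue m l k - greedyValue m l k' : ℤ) with hd_def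
  have hd : 0 < d := by
    have := greedyValue_descent_le hk' hl m
    omega
  have hdiff : MX - MX' = (2 * d : ℤ) := by
    rw [eq_maxDistSq_of_isGreatest hmn hsum hMX, eq_maxDistSq_of_isGreatest hmn hsum' hMX',
      maxDistSq_sub_descent hk' hl, hd_def]
    push_cast
    ring
  refine ⟨hsum', (sum_id_mul_descent hk' hl).trans hwsum, ⟨2 * d, even_two_mul d, by omega, hdiff⟩,
    ?_, ?_⟩
  · have : (0 : ℝ) < (2 * d : ℤ) := by exact_mod_cast (by omega : 0 < 2 * d)
    linarith
  · rintro ⟨t, ht, hMXt⟩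
    exact ⟨t - 2 * d, ht.sub (even_two_mul d), by push_cast at hdiff ⊢; linarith⟩

theorem MX_descent (n m l : ℕ) (hm : 1 ≤ m) (hn : 2 * m ≤ n)
    (hl : 3 ≤ l) (hlm : l ≤ m) (k0 : ℤ) (k : ℕ → ℕ)
    (hsum : (∑ j ∈ Finset.Icc 1 l, k j) = n)
    (hwsum : (∑ j ∈ Finset.Icc 1 l, (j : ℤ) * (k j : ℤ)) = 2 * n - k0 - m)
    (hk1 : 1 ≤ k 1) (hkl : 1 ≤ k l)
    (k' : ℕ → ℕ)
    (hk'1 : k' 1 = k 1 - 1) (hk'l : k' l = k l - 1)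
    (hcase3 : l = 3 → k' 2 = k 2 + 2)
    (hcase : 3 < l → k' 2 = k 2 + 1 ∧ k' (l - 1) = k (l - 1) + 1 ∧
      ∀ j, 3 ≤ j → j ≤ l - 2 → k' j = k j)
    (MX MX' : ℝ)
    (hMX : IsGreatest
      {d : ℝ | ∃ x ∈ JohnsonRep n m, ∃ y ∈ XSet n l k0 k, d = dist x y ^ 2} MX)
    (hMX' : IsGreatest
      {d : ℝ | ∃ x ∈ JohnsonRep n m, ∃ y ∈ XSet n l k0 k', d = dist x y ^ 2} MX') :
    (∑ j ∈ Finset.Icc 1 l, k' j) = n ∧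
    (∑ j ∈ Finset.Icc 1 l, (j : ℤ) * (k' j : ℤ)) = 2 * n - k0 - m ∧
    (∃ t : ℤ, Even t ∧ 0 < t ∧ MX - MX' = (t : ℝ)) ∧
    MX' < MX ∧
    ((∃ t : ℤ, Even t ∧ MX = (t : ℝ)) → (∃ t : ℤ, Even t ∧ MX' = (t : ℝ))) :=
  MX_descent_general n m l hn hl k0 k hsum hwsum hk1 hkl k' hk'1 hk'l hcase3 hcase MX MX' hMX hMX'
end
end

section
/- Let n be a positive integer and let n_0 be defined from the prime factorization of n as in the context. Then for every integer t: n_0 divides t if and only if t(n−t)/n is an even integer (i.e., n divides t(n−t) and the quotient t(n−t)/n is even). -/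
/-!
Dividing by `n`, the condition says `2n ∣ t(n - t)`. Prime by prime, with `f = v_p(2n)` and
`p^⌈f/2⌉ ∣ n`, one has `p^f ∣ t(n - t)` iff `p^⌈f/2⌉ ∣ t`: if `p` divides `t` it divides `n - t`
too, and cancelling `p` from both factors lowers `f` by two. The exponent `⌈v_p(2n)/2⌉` is the
exponent of `p` in `n₀`, except at `p = 2` for odd `n`, where `2 ∣ t(n - t)` holds anyway since
`t` and `n - t` have opposite parity.
-/

noncomputable section

/-- For `n = 2^{e₀} ∏ pᵢ^{eᵢ}` (pᵢ odd primes), `nzero n` is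
`∏ pᵢ^{⌈eᵢ/2⌉}` if `e₀ = 0` and `2^{⌈(e₀+1)/2⌉} ∏ pᵢ^{⌈eᵢ/2⌉}` if `e₀ > 0`. -/
def nzero (n : ℕ) : ℕ :=
  ∏ p ∈ n.primeFactors,
    p ^ (if p = 2 then n.factorization p / 2 + 1 else (n.factorization p + 1) / 2)

theorem Prime.pow_dvd_of_pow_dvd_mul_sub {R : Type*} [CommRing R] [IsDomain R] {p : R}
    (hp : Prime p) (k : ℕ) {m t : R} (hm : p ^ k ∣ m) (h : p ^ (2 * k - 1) ∣ t * (m - t)) :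
    p ^ k ∣ t := by
  induction k generalizing m t with
  | zero => rw [pow_zero]; exact one_dvd t
  | succ k ih =>
    have hpm : p ∣ m := (dvd_pow_self p k.succ_ne_zero).trans hm
    have hpt : p ∣ t := by
      rcases hp.dvd_or_dvd ((dvd_pow_self p (by omega)).trans h) with ht | hmt
      · exact ht
      · simpa using dvd_sub hpm hmt
    obtain ⟨t', rfl⟩ := hpt
    obtain ⟨m', rfl⟩ := hpm
    rw [pow_succ'] at hm ⊢
    refine mul_dvd_mul_left p (ih (mul_dvd_mul_iff_left hp.ne_zero |>.mp hm) ?_)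
    obtain rfl | hk := Nat.eq_zero_or_pos k
    · simp
    rw [show 2 * (k + 1) - 1 = 2 + (2 * k - 1) by omega, pow_add,
      show p * t' * (p * m' - p * t') = p ^ 2 * (t' * (m' - t')) by ring] at h
    exact (mul_dvd_mul_iff_left (pow_ne_zero 2 hp.ne_zero)).mp h

theorem Prime.pow_dvd_mul_sub_iff {R : Type*} [CommRing R] [IsDomain R] {p m t : R}
    (hp : Prime p) {f : ℕ} (hm : p ^ ((f + 1) / 2) ∣ m) :
    p ^ f ∣ t * (m - t) ↔ p ^ ((f + 1) / 2) ∣ t := by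
  refine ⟨fun h ↦ hp.pow_dvd_of_pow_dvd_mul_sub _ hm ((pow_dvd_pow p (by omega)).trans h),
    fun ht ↦ ?_⟩
  calc p ^ f ∣ p ^ ((f + 1) / 2) * p ^ ((f + 1) / 2) := by
        rw [← pow_add]; exact pow_dvd_pow p (by omega)
    _ ∣ t * (m - t) := mul_dvd_mul ht (dvd_sub hm ht)

theorem Int.dvd_and_even_ediv_iff (n x : ℤ) : n ∣ x ∧ Even (x / n) ↔ 2 * n ∣ x := by
  rw [even_iff_two_dvd]
  constructor
  · rintro ⟨hn, h⟩
    rwa [Int.dvd_div_iff_mul_dvd hn, mul_comm] at h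
  · intro h
    have hn : n ∣ x := (dvd_mul_left n 2).trans h
    rwa [Int.dvd_div_iff_mul_dvd hn, mul_comm, and_iff_right hn]

theorem Int.natCast_prod_pow_dvd_iff {s : Finset ℕ} (hs : ∀ p ∈ s, p.Prime) (g : ℕ → ℕ)
    (x : ℤ) :
    ((∏ p ∈ s, p ^ g p : ℕ) : ℤ) ∣ x ↔ ∀ p ∈ s, (p : ℤ) ^ g p ∣ x := by
  push_cast
  refine ⟨fun h p hp ↦ (Finset.dvd_prod_of_mem _ hp).trans h, Finset.prod_dvd_of_coprime ?_⟩
  intro p hp q hq hpq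
  exact IsCoprime.pow <| Nat.isCoprime_iff_coprime.mpr <|
    (Nat.coprime_primes (hs p hp) (hs q hq)).mpr hpq

theorem Int.natCast_dvd_iff_forall_primeFactors {n : ℕ} (hn : n ≠ 0) (x : ℤ) :
    (n : ℤ) ∣ x ↔ ∀ p ∈ n.primeFactors, (p : ℤ) ^ n.factorization p ∣ x := by
  conv_lhs => rw [← Nat.prod_factorization_pow_eq_self hn]
  exact Int.natCast_prod_pow_dvd_iff (fun p ↦ Nat.prime_of_mem_primeFactors) _ x

theorem Nat.factorization_two_mul_apply {n : ℕ} (hn : n ≠ 0) (p : ℕ) :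
    (2 * n).factorization p = n.factorization p + if p = 2 then 1 else 0 := by
  rw [Nat.factorization_mul two_ne_zero hn, Finsupp.add_apply, Nat.prime_two.factorization,
    Finsupp.single_apply, add_comm]
  simp only [eq_comm]

theorem nzero_eq_prod_pow_factorization_two_mul (n : ℕ) :
    nzero n = ∏ p ∈ n.primeFactors, p ^ (((2 * n).factorization p + 1) / 2) := by
  rcases eq_or_ne n 0 with rfl | hn
  · simp [nzero]
  refine Finset.prod_congr rfl fun p hp ↦ ?_
  have hpos := (Nat.prime_of_mem_primeFactors hp).factorization_pos_of_dvd hn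
    (Nat.dvd_of_mem_primeFactors hp)
  rw [Nat.factorization_two_mul_apply hn]
  split_ifs <;> exact congrArg (p ^ ·) (by omega)

theorem Nat.factorization_two_mul_add_one_div_two_le {n p : ℕ} (hp : p ∈ n.primeFactors) :
    ((2 * n).factorization p + 1) / 2 ≤ n.factorization p := by
  have hn : n ≠ 0 := (Nat.mem_primeFactors.mp hp).2.2
  have hpos := (Nat.prime_of_mem_primeFactors hp).factorization_pos_of_dvd hn
    (Nat.dvd_of_mem_primeFactors hp)
  rw [Nat.factorization_two_mul_apply hn]
  split_ifs <;> omega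

theorem Int.two_mul_dvd_mul_sub_iff {n : ℕ} (hn : n ≠ 0) (t : ℤ) :
    2 * (n : ℤ) ∣ t * (n - t) ↔
      ∀ p ∈ n.primeFactors, (p : ℤ) ^ (2 * n).factorization p ∣ t * (n - t) := by
  have h2n : (2 * n).primeFactors = insert 2 n.primeFactors := by
    rw [Nat.primeFactors_mul two_ne_zero hn, Nat.prime_two.primeFactors]
    rfl
  rw [← Nat.cast_two (R := ℤ), ← Nat.cast_mul,
    Int.natCast_dvd_iff_forall_primeFactors (by omega), h2n]
  rcases Nat.even_or_odd n with heven | hodd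
  · rw [Finset.insert_eq_of_mem (Nat.mem_primeFactors.mpr ⟨Nat.prime_two, heven.two_dvd, hn⟩)]
  · rw [Finset.forall_mem_insert, and_iff_right]
    have hv : (2 * n).factorization 2 = 1 := by
      rw [Nat.factorization_two_mul_apply hn, if_pos rfl,
        Nat.factorization_eq_zero_of_not_dvd (Nat.two_dvd_ne_zero.mpr (Nat.odd_iff.mp hodd))]
    rw [hv, pow_one, Nat.cast_two, ← even_iff_two_dvd]
    rcases Int.even_or_odd t with ht | ht
    · exact ht.mul_right _
    · exact (((Int.odd_coe_nat n).mpr hodd).sub_odd ht).mul_left t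

theorem nzero_dvd_iff (n : ℕ) (hn : 0 < n) (t : ℤ) :
    ((nzero n : ℤ) ∣ t) ↔
      ((n : ℤ) ∣ t * ((n : ℤ) - t) ∧ Even (t * ((n : ℤ) - t) / (n : ℤ))) := by
  rw [Int.dvd_and_even_ediv_iff, Int.two_mul_dvd_mul_sub_iff hn.ne',
    nzero_eq_prod_pow_factorization_two_mul,
    Int.natCast_prod_pow_dvd_iff (fun p ↦ Nat.prime_of_mem_primeFactors)]
  refine forall₂_congr fun p hp ↦ (Prime.pow_dvd_mul_sub_iff ?_ ?_).symm
  · exact Nat.prime_iff_prime_int.mp (Nat.prime_of_mem_primeFactors hp)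
  · exact_mod_cast (pow_dvd_pow p (Nat.factorization_two_mul_add_one_div_two_le hp)).trans
      (Nat.ordProj_dvd n p)
end
end

section
/- Let m ≥ 1 and n ≥ 2m be integers with n > n_0, where n_0 is defined from the prime factorization of n as in the context, and let n_1 be a positive integer with n_0·n_1 < n. If 3·n_0·n_1 − n_0²·n_1²/n ≤ 4m, then for every vector y of the following set, J̃(n,m) ∪ {y} is an m-distance set: if m < n_0n_1, the set of all vectors with n − n_0n_1 + m coordinates equal to n_0n_1/n and n_0n_1 − m coordinates equal to −1 + n_0n_1/n; if m = n_0n_1, the single vector all of whose n coordinates equal m/n; if m > n_0n_1, the set of all vectors with m − n_0n_1 coordinates equal to 1 + n_0n_1/n and n + n_0n_1 − m coordinates equal to n_0n_1/n. -/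
noncomputable section

/-!
A point of `J̃(n,m)` is the indicator `1_A` of an `m`-set `A`, and
`‖1_A - 1_C‖² = 2(m - |A ∩ C|)`: the squared distances inside `J̃(n,m)` are `2k` for
`1 ≤ k ≤ m`, all of which occur once `n ≥ 2m`. With `N = n₀n₁`, the vector `y` is
`(N/n)𝟙 ∓ 1_B` with `|B| = |N - m|`, and expanding the square gives
`‖1_A - y‖² = N - N²/n + 2|A ∩ B|`, resp. `N - N²/n + 2|B \ A|`.
The exponents in `n₀` are chosen so that `n ∣ n₀²` and `n₀²/n ≡ n₀ (mod 2)`; hence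
`N - N²/n = 2c` for a positive integer `c`, and `3N - N²/n ≤ 4m` says `N + c ≤ 2m`, which
keeps these squared distances among `2, 4, …, 2m`.
-/

open Finset

lemma dist_sq_eq_of_indicator {n : ℕ} {x y : EuclideanSpace ℝ (Fin n)} {A B : Finset (Fin n)}
    {a s : ℝ} (hx : ∀ i, x i = if i ∈ A then 1 else 0)
    (hy : ∀ i, y i = a + if i ∈ B then s else 0) :
    dist x y ^ 2 = #A + s ^ 2 * #B - 2 * s * #(A ∩ B) - 2 * a * (#A - s * #B) + n * a ^ 2 := by
  have hpt : ∀ i, (x i - y i) ^ 2 =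
      (if i ∈ A then 1 else 0) + s ^ 2 * (if i ∈ B then 1 else 0)
        - 2 * s * (if i ∈ A ∩ B then 1 else 0)
        - 2 * a * ((if i ∈ A then 1 else 0) - s * (if i ∈ B then 1 else 0)) + a ^ 2 := by
    intro i
    by_cases hA : i ∈ A <;> by_cases hB : i ∈ B <;> simp [hx, hy, hA, hB] <;> ring
  rw [EuclideanSpace.dist_eq, Real.sq_sqrt (by positivity)]
  simp only [Real.dist_eq, sq_abs, hpt, Finset.sum_add_distrib, Finset.sum_sub_distrib,
    ← Finset.mul_sum, Finset.sum_boole, Finset.sum_const, Finset.filter_mem_eq_inter]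
  simp

lemma exists_finset_pair_card_inter {α : Type*} [Fintype α] [DecidableEq α] {m k : ℕ}
    (hk : k ≤ m) (hcard : m + k ≤ Fintype.card α) :
    ∃ A C : Finset α, #A = m ∧ #C = m ∧ #(A ∩ C) = m - k := by
  obtain ⟨D, -, hD⟩ := Finset.exists_subset_card_eq (s := Finset.univ) (by simpa using hcard)
  obtain ⟨A, hAD, hA⟩ := Finset.exists_subset_card_eq (s := D) (n := m) (by omega)
  obtain ⟨E, hEA, hE⟩ := Finset.exists_subset_card_eq (s := A) (n := m - k) (by omega)
  have hdisj : Disjoint E (D \ A) := Finset.disjoint_of_subset_left hEA Finset.disjoint_sdiff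
  refine ⟨A, E ∪ (D \ A), hA, ?_, ?_⟩
  · rw [Finset.card_union_of_disjoint hdisj, Finset.card_sdiff_of_subset hAD]
    omega
  · rw [Finset.inter_union_distrib_left, Finset.inter_sdiff_self, Finset.union_empty,
      Finset.inter_eq_right.2 hEA, hE]

section Johnson

variable {n m : ℕ}

lemma exists_finset_of_mem_johnsonRep {x : EuclideanSpace ℝ (Fin n)} (hx : x ∈ JohnsonRep n m) :
    ∃ A : Finset (Fin n), #A = m ∧ ∀ i, x i = if i ∈ A then 1 else 0 := by
  classical
  refine ⟨({i | x i = 1} : Finset (Fin n)), ?_, fun i => ?_⟩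
  · rw [← hx.2, ← Set.ncard_coe_finset, Finset.coe_filter_univ]
  · rcases hx.1 i with h | h <;> simp [h]

lemma indicator_mem_johnsonRep (A : Finset (Fin n)) :
    WithLp.toLp 2 (fun i => if i ∈ A then (1 : ℝ) else 0) ∈ JohnsonRep n #A := by
  refine ⟨fun i => by by_cases h : i ∈ A <;> simp [h], ?_⟩
  rw [← Set.ncard_coe_finset]
  congr 1
  ext i
  by_cases h : i ∈ A <;> simp [h]

lemma exists_dist_sq_eq_of_mem_johnsonRep {x z : EuclideanSpace ℝ (Fin n)}
    (hx : x ∈ JohnsonRep n m) (hz : z ∈ JohnsonRep n m) (hxz : x ≠ z) :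
    ∃ k ∈ Set.Icc 1 m, dist x z ^ 2 = 2 * k := by
  obtain ⟨A, hA, hxA⟩ := exists_finset_of_mem_johnsonRep hx
  obtain ⟨C, hC, hzC⟩ := exists_finset_of_mem_johnsonRep hz
  have hle : #(A ∩ C) ≤ m := hA ▸ Finset.card_le_card Finset.inter_subset_left
  have hlt : #(A ∩ C) ≠ m := by
    intro h
    have hAC : A = C := Finset.eq_of_subset_of_card_le
      (Finset.inter_eq_left.1 (Finset.eq_of_subset_of_card_le Finset.inter_subset_left
        (by omega))) (by omega)
    exact hxz (PiLp.ext fun i => by rw [hxA, hzC, hAC])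
  refine ⟨m - #(A ∩ C), ⟨by omega, by omega⟩, ?_⟩
  rw [dist_sq_eq_of_indicator (a := 0) (s := 1) hxA (fun i => (hzC i).trans (zero_add _).symm),
    hA, hC, Nat.cast_sub hle]
  ring

lemma exists_mem_johnsonRep_dist_sq_eq (hn : 2 * m ≤ n) {k : ℕ} (hkm : k ≤ m) :
    ∃ x ∈ JohnsonRep n m, ∃ z ∈ JohnsonRep n m, dist x z ^ 2 = 2 * k := by
  obtain ⟨A, C, hA, hC, hAC⟩ := exists_finset_pair_card_inter (α := Fin n) hkm
    (by simp only [Fintype.card_fin]; omega)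
  refine ⟨_, hA ▸ indicator_mem_johnsonRep A, _, hC ▸ indicator_mem_johnsonRep C, ?_⟩
  rw [dist_sq_eq_of_indicator (a := 0) (s := 1) (fun i => rfl) (fun i => (zero_add _).symm),
    hA, hC, hAC, Nat.cast_sub hkm]
  ring

end Johnson

lemma isSDistanceSet_of_dist_sq {n m : ℕ} {S : Set (EuclideanSpace ℝ (Fin n))}
    (hdist : ∀ x ∈ S, ∀ z ∈ S, x ≠ z → ∃ k ∈ Set.Icc 1 m, dist x z ^ 2 = 2 * k)
    (hall : ∀ k ∈ Set.Icc 1 m, ∃ x ∈ S, ∃ z ∈ S, dist x z ^ 2 = 2 * k) :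
    IsSDistanceSet m S := by
  have hsqrt : ∀ {x z : EuclideanSpace ℝ (Fin n)} {k : ℕ},
      dist x z ^ 2 = 2 * k → dist x z = √(2 * k) := fun h => by
    rw [← h, Real.sqrt_sq dist_nonneg]
  have hinj : Set.InjOn (fun k : ℕ => √(2 * k)) (Set.Icc 1 m) := fun a _ b _ hab => by
    have := (Real.sqrt_inj (by positivity) (by positivity)).1 hab
    exact_mod_cast (by linarith : (a : ℝ) = b)
  have hset : distSet S = (fun k : ℕ => √(2 * k)) '' Set.Icc 1 m := by
    ext d
    constructor
    · rintro ⟨x, hx, z, hz, hxz, rfl⟩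
      obtain ⟨k, hk, hd⟩ := hdist x hx z hz hxz
      exact ⟨k, hk, (hsqrt hd).symm⟩
    · rintro ⟨k, hk, rfl⟩
      obtain ⟨x, hx, z, hz, hd⟩ := hall k hk
      have hxz : x ≠ z := by
        rintro rfl
        have : (0 : ℝ) < 2 * k := by have := hk.1; positivity
        simp_all
      exact ⟨x, hx, z, hz, hxz, (hsqrt hd).symm⟩
  refine ⟨hset ▸ (Set.finite_Icc 1 m).image _, ?_⟩
  rw [hset, hinj.ncard_image, Set.ncard_eq_toFinset_card', Set.toFinset_Icc,
    Nat.card_Icc, Nat.add_sub_cancel]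

lemma isSDistanceSet_johnsonRep_union_singleton {n m : ℕ} (hn : 2 * m ≤ n)
    {y : EuclideanSpace ℝ (Fin n)}
    (hy : ∀ x ∈ JohnsonRep n m, ∃ k ∈ Set.Icc 1 m, dist x y ^ 2 = 2 * k) :
    IsSDistanceSet m (JohnsonRep n m ∪ {y}) := by
  refine isSDistanceSet_of_dist_sq ?_ fun k hk => ?_
  · rintro x (hx | rfl) z (hz | rfl) hxz
    · exact exists_dist_sq_eq_of_mem_johnsonRep hx hz hxz
    · exact hy x hx
    · simpa only [dist_comm] using hy z hz
    · exact absurd rfl hxz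
  · obtain ⟨x, hx, z, hz, hd⟩ := exists_mem_johnsonRep_dist_sq_eq hn hk.2
    exact ⟨x, Or.inl hx, z, Or.inl hz, hd⟩

lemma forall_eq_or_eq_of_ncard_add_ncard {ι α : Type*} [Fintype ι] {f : ι → α} {u v : α}
    (huv : u ≠ v) (h : {i | f i = u}.ncard + {i | f i = v}.ncard = Fintype.card ι) :
    ∀ i, f i = u ∨ f i = v := by
  have hdisj : Disjoint {i | f i = u} {i | f i = v} :=
    Set.disjoint_left.2 fun i hu hv => huv (hu.symm.trans hv)
  have huniv : {i | f i = u} ∪ {i | f i = v} = Set.univ := by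
    apply Set.eq_of_subset_of_ncard_le (Set.subset_univ _)
    rw [Set.ncard_union_eq hdisj, h, Set.ncard_univ, Nat.card_eq_fintype_card]
  intro i
  simpa using huniv.ge (Set.mem_univ i)

lemma exists_finset_eq_add_indicator {n k : ℕ} {f : Fin n → ℝ} {a s : ℝ} (hs : s ≠ 0)
    (hk : k ≤ n) (ha : {i | f i = a}.ncard = n - k) (has : {i | f i = a + s}.ncard = k) :
    ∃ B : Finset (Fin n), #B = k ∧ ∀ i, f i = a + if i ∈ B then s else 0 := by
  have hcover := forall_eq_or_eq_of_ncard_add_ncard (f := f) (u := a) (v := a + s)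
    (by simpa using hs) (by rw [ha, has, Fintype.card_fin]; omega)
  refine ⟨({i | f i = a + s} : Finset (Fin n)), ?_, fun i => ?_⟩
  · rw [← has, ← Set.ncard_coe_finset, Finset.coe_filter_univ]
  · rcases hcover i with h | h <;> simp [h, hs]

lemma exists_dist_sq_eq_of_eq_add_indicator {n m N c : ℕ} {y : EuclideanSpace ℝ (Fin n)}
    {B : Finset (Fin n)} {s : ℝ} (hn : n ≠ 0) (hc : 0 < c) (hcN : (N : ℝ) - N ^ 2 / n = 2 * c)
    (hNc : N + c ≤ 2 * m) (hy : ∀ i, y i = N / n + if i ∈ B then s else 0)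
    (hB : (s = -1 ∧ #B + m = N) ∨ (s = 1 ∧ N + #B = m)) {x : EuclideanSpace ℝ (Fin n)}
    (hx : x ∈ JohnsonRep n m) :
    ∃ k ∈ Set.Icc 1 m, dist x y ^ 2 = 2 * k := by
  obtain ⟨A, hA, hxA⟩ := exists_finset_of_mem_johnsonRep hx
  have htB : #(A ∩ B) ≤ #B := Finset.card_le_card Finset.inter_subset_right
  have hdist := dist_sq_eq_of_indicator hxA hy
  set a : ℝ := N / n
  have hNa : (N : ℝ) ^ 2 / n = N * a := by ring
  have hna : (n : ℝ) * a ^ 2 = N * a := by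
    rw [sq, ← mul_assoc, mul_div_cancel₀ _ (Nat.cast_ne_zero.2 hn)]
  rw [hNa] at hcN
  rw [hA, hna] at hdist
  rcases hB with ⟨rfl, hB⟩ | ⟨rfl, hB⟩
  · refine ⟨c + #(A ∩ B), ⟨by omega, by omega⟩, ?_⟩
    have hBR : (#B : ℝ) + m = N := by exact_mod_cast hB
    rw [hdist]
    push_cast
    linear_combination (1 - 2 * a) * hBR + hcN
  · have hcN_le : c ≤ N := by
      have : (0 : ℝ) ≤ N * a := by positivity
      exact_mod_cast (by linarith : (c : ℝ) ≤ N)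
    refine ⟨c + (#B - #(A ∩ B)), ⟨by omega, by omega⟩, ?_⟩
    have hBR : (N : ℝ) + #B = m := by exact_mod_cast hB
    rw [hdist, Nat.cast_add, Nat.cast_sub htB]
    linear_combination (2 * a - 1) * hBR + hcN

section Nzero

variable {n : ℕ}

lemma nzero_pos (n : ℕ) : 0 < nzero n :=
  Finset.prod_pos fun _ hp => pow_pos (Nat.pos_of_mem_primeFactors hp) _

lemma dvd_nzero_sq (hn : n ≠ 0) : n ∣ nzero n ^ 2 := by
  have hprod : ∏ p ∈ n.primeFactors, p ^ n.factorization p = n :=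
    Nat.support_factorization n ▸ Nat.prod_factorization_pow_eq_self hn
  conv_lhs => rw [← hprod]
  rw [nzero, ← Finset.prod_pow]
  refine Finset.prod_dvd_prod_of_dvd _ _ fun p _ => ?_
  rw [← pow_mul]
  exact pow_dvd_pow p (by split_ifs <;> omega)

lemma nzero_sq_div_modEq_two (hn : n ≠ 0) : nzero n ^ 2 / n ≡ nzero n [MOD 2] := by
  obtain ⟨r, hr⟩ := dvd_nzero_sq hn
  rw [hr, Nat.mul_div_cancel_left _ (Nat.pos_of_ne_zero hn)]
  rcases Nat.even_or_odd n with hev | hodd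
  · have h2 : 2 ∈ n.primeFactors := Nat.mem_primeFactors.2 ⟨Nat.prime_two, hev.two_dvd, hn⟩
    have hpow : 2 ^ (n.factorization 2 / 2 + 1) ∣ nzero n := by
      have h := Finset.dvd_prod_of_mem (fun p => p ^ (if p = 2 then n.factorization p / 2 + 1
        else (n.factorization p + 1) / 2)) h2
      simp only [↓reduceIte] at h
      exact h
    have hr0 : r ≠ 0 := by
      rintro rfl
      exact (nzero_pos n).ne' (pow_eq_zero_iff two_ne_zero |>.1 (by simpa using hr))
    have hle : 2 * (n.factorization 2 / 2 + 1) ≤ n.factorization 2 + r.factorization 2 := by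
      rw [← Finsupp.add_apply, ← Nat.factorization_mul hn hr0, ← hr,
        ← Nat.prime_two.pow_dvd_iff_le_factorization (pow_ne_zero 2 (nzero_pos n).ne'), pow_mul']
      exact pow_dvd_pow_of_dvd hpow 2
    have hr2 : 2 ∣ r := (Nat.prime_two.dvd_iff_one_le_factorization hr0).2 (by omega)
    have hN2 : 2 ∣ nzero n := (dvd_pow_self 2 (by omega)).trans hpow
    exact (Nat.modEq_zero_iff_dvd.2 hr2).trans (Nat.modEq_zero_iff_dvd.2 hN2).symm
  · have hN : ¬ 2 ∣ nzero n := by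
      rw [nzero, Nat.prime_two.prime.dvd_finsetProd_iff]
      rintro ⟨p, hp, h2p⟩
      have hp2 : p = 2 :=
        ((Nat.prime_dvd_prime_iff_eq Nat.prime_two (Nat.prime_of_mem_primeFactors hp)).1
          (Nat.prime_two.dvd_of_dvd_pow h2p)).symm
      exact Nat.not_even_iff_odd.2 hodd
        (even_iff_two_dvd.2 (hp2 ▸ Nat.dvd_of_mem_primeFactors hp))
    have hr2 : ¬ 2 ∣ r := fun h =>
      hN (Nat.prime_two.dvd_of_dvd_pow (hr ▸ dvd_mul_of_dvd_right h n))
    exact (Nat.two_dvd_ne_zero.1 hr2).trans (Nat.two_dvd_ne_zero.1 hN).symm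

end Nzero

lemma exists_nat_sub_sq_div_eq_two_mul {n n1 : ℕ} (hn1 : 0 < n1) (hN : nzero n * n1 < n) :
    ∃ c : ℕ, 0 < c ∧
      ((nzero n * n1 : ℕ) : ℝ) - ((nzero n * n1 : ℕ) : ℝ) ^ 2 / n = 2 * c := by
  have hn : n ≠ 0 := by omega
  set N := nzero n * n1
  set q := nzero n ^ 2 / n * n1 ^ 2
  have hqn : n * q = N ^ 2 := by
    rw [← mul_assoc, Nat.mul_div_cancel' (dvd_nzero_sq hn), mul_pow]
  have hqN : q < N := by
    refine Nat.lt_of_mul_lt_mul_left (a := n) ?_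
    rw [hqn, sq, mul_comm n]
    exact Nat.mul_lt_mul_of_pos_left hN (Nat.mul_pos (nzero_pos n) hn1)
  have hsq : n1 ^ 2 ≡ n1 [MOD 2] := by
    rw [Nat.ModEq, Nat.pow_mod]
    rcases Nat.mod_two_eq_zero_or_one n1 with h | h <;> simp [h]
  have hqN2 : q % 2 = N % 2 := (nzero_sq_div_modEq_two hn).mul hsq
  refine ⟨(N - q) / 2, by omega, ?_⟩
  have hqR : (N : ℝ) ^ 2 / n = q := by
    rw [div_eq_iff (Nat.cast_ne_zero.2 hn)]
    exact_mod_cast (mul_comm n q ▸ hqn).symm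
  have hc : (N : ℝ) = 2 * ((N - q) / 2 : ℕ) + q := by exact_mod_cast (by omega : N = _)
  rw [hqR]
  linarith

theorem add_vector_of_cond_general_general (n m n1 : ℕ) (hn : 2 * m ≤ n)
    (hn1 : 0 < n1) (hn1n : nzero n * n1 < n)
    (h2 : 3 * ((nzero n : ℝ) * n1) - (nzero n : ℝ) ^ 2 * (n1 : ℝ) ^ 2 / n ≤ 4 * m)
    (y : EuclideanSpace ℝ (Fin n))
    (hy :
      (m < nzero n * n1 ∧
        {i : Fin n | y i = ((nzero n : ℝ) * n1) / n}.ncard = n - nzero n * n1 + m ∧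
        {i : Fin n | y i = -1 + ((nzero n : ℝ) * n1) / n}.ncard = nzero n * n1 - m) ∨
      (m = nzero n * n1 ∧ ∀ i, y i = (m : ℝ) / n) ∨
      (nzero n * n1 < m ∧
        {i : Fin n | y i = 1 + ((nzero n : ℝ) * n1) / n}.ncard = m - nzero n * n1 ∧
        {i : Fin n | y i = ((nzero n : ℝ) * n1) / n}.ncard = n + nzero n * n1 - m)) :
    IsSDistanceSet m (JohnsonRep n m ∪ {y}) := by
  obtain ⟨c, hc, hcN⟩ := exists_nat_sub_sq_div_eq_two_mul hn1 hn1n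
  set N := nzero n * n1
  have hNR : (nzero n : ℝ) * n1 = N := by push_cast [N]; rfl
  simp only [hNR] at hy
  simp only [← mul_pow, hNR] at h2
  have hNc : N + c ≤ 2 * m := by
    have : (N : ℝ) + c ≤ 2 * m := by linarith
    exact_mod_cast this
  obtain ⟨B, s, hyB, hB⟩ : ∃ (B : Finset (Fin n)) (s : ℝ),
      (∀ i, y i = N / n + if i ∈ B then s else 0) ∧
        ((s = -1 ∧ #B + m = N) ∨ (s = 1 ∧ N + #B = m)) := by
    rcases hy with ⟨hlt, hyN, hyN1⟩ | ⟨heq, hyN⟩ | ⟨hgt, hyN1, hyN⟩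
    · obtain ⟨B, hB, hyB⟩ := exists_finset_eq_add_indicator (f := y.ofLp) (s := -1)
        (k := N - m) (by norm_num) (by omega) (by rw [hyN]; omega) (by rw [← hyN1, add_comm])
      exact ⟨B, -1, hyB, Or.inl ⟨rfl, by omega⟩⟩
    · exact ⟨∅, -1, fun i => by simp [hyN, heq], Or.inl ⟨rfl, by simp [heq]⟩⟩
    · obtain ⟨B, hB, hyB⟩ := exists_finset_eq_add_indicator (f := y.ofLp) (s := 1)
        (k := m - N) (by norm_num) (by omega) (by rw [hyN]; omega) (by rw [← hyN1, add_comm])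
      exact ⟨B, 1, hyB, Or.inr ⟨rfl, by omega⟩⟩
  exact isSDistanceSet_johnsonRep_union_singleton hn fun x hx =>
    exists_dist_sq_eq_of_eq_add_indicator (by omega) hc hcN hNc hyB hB hx

theorem add_vector_of_cond_general (n m n1 : ℕ) (hm : 1 ≤ m) (hn : 2 * m ≤ n)
    (h0 : nzero n < n) (hn1 : 0 < n1) (hn1n : nzero n * n1 < n)
    (h2 : 3 * ((nzero n : ℝ) * n1) - (nzero n : ℝ) ^ 2 * (n1 : ℝ) ^ 2 / n ≤ 4 * m)
    (y : EuclideanSpace ℝ (Fin n))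
    (hy :
      (m < nzero n * n1 ∧
        {i : Fin n | y i = ((nzero n : ℝ) * n1) / n}.ncard = n - nzero n * n1 + m ∧
        {i : Fin n | y i = -1 + ((nzero n : ℝ) * n1) / n}.ncard = nzero n * n1 - m) ∨
      (m = nzero n * n1 ∧ ∀ i, y i = (m : ℝ) / n) ∨
      (nzero n * n1 < m ∧
        {i : Fin n | y i = 1 + ((nzero n : ℝ) * n1) / n}.ncard = m - nzero n * n1 ∧
        {i : Fin n | y i = ((nzero n : ℝ) * n1) / n}.ncard = n + nzero n * n1 - m)) :
    IsSDistanceSet m (JohnsonRep n m ∪ {y}) :=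
  add_vector_of_cond_general_general n m n1 hn hn1 hn1n h2 y hy
end
end

section
/- For every integer n ≥ 4 with n ≠ 9, J̃(n,2) is maximal as a two-distance set in the hyperplane H(n,2); on the other hand, J̃(9,2) is not maximal as a two-distance set in H(9,2). -/
/-!
If `y ∈ H(n,2)` lies at distance `√2` or `2` from every `e_i + e_j`, then, since
`‖y - e_i - e_j‖² = ‖y‖² - 2 (y_i + y_j) + 2`, every pair sum `y_i + y_j` (`i ≠ j`) equals
`‖y‖²/2` or `‖y‖²/2 - 1`. For `n ≥ 4` this forces `y` to be constant, equal to `b` say, off a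
single coordinate, whose value is `b` or `b ± 1`. Feeding this into `∑ y_i = 2` and into the
value of `‖y‖²` leaves one solution: `b = 1/3` with exceptional coordinate `-2/3`, and `n b = 3`,
i.e. `n = 9`.
-/

noncomputable section

/-- `J̃(n,m)` is maximal as an `m`-distance set in the hyperplane `H(n,m)`. -/
def JohnsonRepMaximal (n m : ℕ) : Prop :=
  ¬∃ y ∈ Hyp n m \ JohnsonRep n m, IsSDistanceSet m (JohnsonRep n m ∪ {y})

lemma sqrt_two_ne_two : √2 ≠ 2 :=
  (Real.sqrt_two_lt_three_halves.trans (by norm_num)).ne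

lemma mem_sqrt_two_two_iff {d : ℝ} (hd : 0 ≤ d) :
    d ∈ ({√2, 2} : Set ℝ) ↔ d ^ 2 = 2 ∨ d ^ 2 = 4 := by
  have h2 : d = √2 ↔ d ^ 2 = 2 :=
    ⟨fun h => h ▸ Real.sq_sqrt zero_le_two, fun h => by rw [← h, Real.sqrt_sq hd]⟩
  have h4 : d = 2 ↔ d ^ 2 = 4 := by
    rw [show (4 : ℝ) = 2 ^ 2 by norm_num, sq_eq_sq₀ hd zero_le_two]
  rw [Set.mem_insert_iff, Set.mem_singleton_iff, h2, h4]

section PairVec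

variable {n : ℕ}

def pairVec (i j : Fin n) : EuclideanSpace ℝ (Fin n) :=
  EuclideanSpace.single i 1 + EuclideanSpace.single j 1

lemma pairVec_apply (i j k : Fin n) :
    pairVec i j k = (if k = i then 1 else 0) + (if k = j then 1 else 0) := by
  simp [pairVec, PiLp.single_apply]

lemma pairVec_comm (i j : Fin n) : pairVec i j = pairVec j i := add_comm _ _

lemma inner_pairVec (y : EuclideanSpace ℝ (Fin n)) (i j : Fin n) :
    inner ℝ y (pairVec i j) = y i + y j := by
  simp [pairVec, inner_add_right, EuclideanSpace.inner_single_right]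

lemma norm_sq_pairVec {i j : Fin n} (hij : i ≠ j) : ‖pairVec i j‖ ^ 2 = 2 := by
  rw [← real_inner_self_eq_norm_sq, inner_pairVec, pairVec_apply, pairVec_apply]
  simp [hij, hij.symm]
  norm_num

lemma dist_sq_pairVec (y : EuclideanSpace ℝ (Fin n)) {i j : Fin n} (hij : i ≠ j) :
    dist y (pairVec i j) ^ 2 = ‖y‖ ^ 2 - 2 * (y i + y j) + 2 := by
  rw [dist_eq_norm, norm_sub_sq_real, inner_pairVec, norm_sq_pairVec hij]

lemma dist_pairVec_mem_iff (y : EuclideanSpace ℝ (Fin n)) {i j : Fin n} (hij : i ≠ j) :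
    dist y (pairVec i j) ∈ ({√2, 2} : Set ℝ) ↔
      y i + y j = ‖y‖ ^ 2 / 2 ∨ y i + y j = ‖y‖ ^ 2 / 2 - 1 := by
  rw [mem_sqrt_two_two_iff dist_nonneg, dist_sq_pairVec y hij]
  constructor <;> rintro (h | h)
  all_goals first | (left; linarith) | (right; linarith)

lemma setOf_pairVec_eq_one {i j : Fin n} (hij : i ≠ j) :
    {k | pairVec i j k = 1} = {i, j} := by
  ext k
  by_cases hi : k = i <;> by_cases hj : k = j <;> simp_all [pairVec_apply]

lemma mem_johnsonRep_two_iff {x : EuclideanSpace ℝ (Fin n)} :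
    x ∈ JohnsonRep n 2 ↔ ∃ i j, i ≠ j ∧ x = pairVec i j := by
  constructor
  · rintro ⟨h01, hcard⟩
    obtain ⟨i, j, hij, hset⟩ := Set.ncard_eq_two.mp hcard
    refine ⟨i, j, hij, PiLp.ext fun k => ?_⟩
    have hk : x k = 1 ↔ k = i ∨ k = j := by simpa using Set.ext_iff.mp hset k
    rcases h01 k with h | h <;> by_cases hi : k = i <;> by_cases hj : k = j <;>
      simp_all [pairVec_apply]
  · rintro ⟨i, j, hij, rfl⟩
    refine ⟨fun k => ?_, by rw [setOf_pairVec_eq_one hij, Set.ncard_pair hij]⟩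
    by_cases hi : k = i <;> by_cases hj : k = j <;> simp_all [pairVec_apply]

lemma pairVec_mem_johnsonRep {i j : Fin n} (hij : i ≠ j) : pairVec i j ∈ JohnsonRep n 2 :=
  mem_johnsonRep_two_iff.mpr ⟨i, j, hij, rfl⟩

lemma pairVec_add_pairVec_mem {i j k l : Fin n} (hij : i ≠ j) (hkl : k ≠ l)
    (hne : pairVec i j ≠ pairVec k l) :
    pairVec i j k + pairVec i j l = 1 ∨ pairVec i j k + pairVec i j l = 0 := by
  simp only [pairVec_apply]
  split_ifs <;> subst_vars <;> simp_all [pairVec_comm]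

lemma dist_mem_distSet {S : Set (EuclideanSpace ℝ (Fin n))} {x y : EuclideanSpace ℝ (Fin n)}
    (hx : x ∈ S) (hy : y ∈ S) (hxy : x ≠ y) : dist x y ∈ distSet S :=
  ⟨x, hx, y, hy, hxy, rfl⟩

lemma distSet_mono {S T : Set (EuclideanSpace ℝ (Fin n))} (h : S ⊆ T) :
    distSet S ⊆ distSet T := by
  rintro d ⟨x, hx, y, hy, hxy, rfl⟩
  exact dist_mem_distSet (h hx) (h hy) hxy

lemma distSet_union_singleton_subset {S : Set (EuclideanSpace ℝ (Fin n))}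
    {y : EuclideanSpace ℝ (Fin n)} {D : Set ℝ} (hS : distSet S ⊆ D)
    (hy : ∀ x ∈ S, x ≠ y → dist y x ∈ D) : distSet (S ∪ {y}) ⊆ D := by
  rintro d ⟨p, hp, q, hq, hpq, rfl⟩
  rcases hp with hp | rfl <;> rcases hq with hq | rfl
  · exact hS (dist_mem_distSet hp hq hpq)
  · exact dist_comm q p ▸ hy p hp hpq
  · exact hy q hq hpq.symm
  · exact absurd rfl hpq

lemma IsSDistanceSet.distSet_eq_of_subset {s : ℕ} {S : Set (EuclideanSpace ℝ (Fin n))}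
    (hS : IsSDistanceSet s S) {D : Set ℝ} (hD : D ⊆ distSet S) (hcard : D.ncard = s) :
    distSet S = D :=
  (Set.eq_of_subset_of_ncard_le hD (by rw [hcard, hS.2]) hS.1).symm

lemma isSDistanceSet_two_of_distSet_eq {S : Set (EuclideanSpace ℝ (Fin n))} {a b : ℝ}
    (hab : a ≠ b) (hS : distSet S = {a, b}) : IsSDistanceSet 2 S := by
  rw [IsSDistanceSet, hS]
  exact ⟨Set.toFinite _, Set.ncard_pair hab⟩

lemma dist_sq_pairVec_pairVec {i j k l : Fin n} (hij : i ≠ j) (hkl : k ≠ l) :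
    dist (pairVec i j) (pairVec k l) ^ 2 = 4 - 2 * (pairVec i j k + pairVec i j l) := by
  rw [dist_sq_pairVec _ hkl, norm_sq_pairVec hij]
  ring

lemma distSet_johnsonRep_two (hn : 4 ≤ n) : distSet (JohnsonRep n 2) = {√2, 2} := by
  apply Set.Subset.antisymm
  · rintro d ⟨x, hx, y, hy, hxy, rfl⟩
    obtain ⟨i, j, hij, rfl⟩ := mem_johnsonRep_two_iff.mp hx
    obtain ⟨k, l, hkl, rfl⟩ := mem_johnsonRep_two_iff.mp hy
    rw [mem_sqrt_two_two_iff dist_nonneg, dist_sq_pairVec_pairVec hij hkl]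
    rcases pairVec_add_pairVec_mem hij hkl hxy with h | h <;> rw [h] <;> norm_num
  · set e := Fin.castLE hn
    have he : Function.Injective e := Fin.castLE_injective hn
    have h01 : e 0 ≠ e 1 := he.ne (by decide)
    have h02 : e 0 ≠ e 2 := he.ne (by decide)
    have h23 : e 2 ≠ e 3 := he.ne (by decide)
    have hsqrt2 : dist (pairVec (e 0) (e 1)) (pairVec (e 0) (e 2)) = √2 := by
      rw [← Real.sqrt_sq dist_nonneg, dist_sq_pairVec_pairVec h01 h02]
      simp [pairVec_apply, h01, h02.symm, (he.ne (by decide) : e 2 ≠ e 1)]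
      norm_num
    have htwo : dist (pairVec (e 0) (e 1)) (pairVec (e 2) (e 3)) = 2 := by
      rw [← sq_eq_sq₀ dist_nonneg zero_le_two, dist_sq_pairVec_pairVec h01 h23]
      simp [pairVec_apply, h02.symm, (he.ne (by decide) : e 2 ≠ e 1),
        (he.ne (by decide) : e 3 ≠ e 0), (he.ne (by decide) : e 3 ≠ e 1)]
      norm_num
    rintro d (rfl | rfl)
    · exact hsqrt2 ▸ dist_mem_distSet (pairVec_mem_johnsonRep h01)
        (pairVec_mem_johnsonRep h02) (dist_ne_zero.mp (by rw [hsqrt2]; positivity))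
    · exact htwo ▸ dist_mem_distSet (pairVec_mem_johnsonRep h01)
        (pairVec_mem_johnsonRep h23) (dist_ne_zero.mp (by rw [htwo]; positivity))

end PairVec

section PairSums
variable {ι : Type*} [Fintype ι]

lemma exists_pair_ne_of_four_le_card (hι : 4 ≤ Fintype.card ι) (i j : ι) :
    ∃ k l, k ≠ l ∧ k ≠ i ∧ k ≠ j ∧ l ≠ i ∧ l ≠ j := by
  classical
  have hcard : 1 < ({i, j}ᶜ : Finset ι).card := by
    have := Finset.card_le_two (a := i) (b := j)
    rw [Finset.card_compl]
    omega
  obtain ⟨k, hk, l, hl, hkl⟩ := Finset.one_lt_card.mp hcard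
  simp only [Finset.mem_compl, Finset.mem_insert, Finset.mem_singleton, not_or] at hk hl
  exact ⟨k, l, hkl, hk.1, hk.2, hl.1, hl.2⟩

lemma sum_eq_card_mul_add_of_forall_ne_eq {g : ι → ℝ} {i₀ : ι} {b : ℝ}
    (hg : ∀ k, k ≠ i₀ → g k = b) : ∑ k, g k = Fintype.card ι * b + (g i₀ - b) := by
  have hsingle : ∑ k, (g k - b) = g i₀ - b :=
    Finset.sum_eq_single i₀ (fun k _ hk => by rw [hg k hk, sub_self])
      (fun h => absurd (Finset.mem_univ i₀) h)
  rw [← hsingle, Finset.sum_sub_distrib, Finset.sum_const, Finset.card_univ, nsmul_eq_mul]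
  ring

theorem exists_eq_off_single_of_add_mem (hι : 4 ≤ Fintype.card ι) {f : ι → ℝ} {c : ℝ}
    (hf : ∀ i j, i ≠ j → f i + f j = c ∨ f i + f j = c - 1) :
    ∃ i₀ b, (∀ k, k ≠ i₀ → f k = b) ∧ (f i₀ = b + 1 ∨ f i₀ = b ∨ f i₀ = b - 1) := by
  by_cases hconst : ∀ i j, f i = f j
  · obtain ⟨i₀⟩ : Nonempty ι := Fintype.card_pos_iff.mp (by omega)
    exact ⟨i₀, f i₀, fun k _ => hconst k i₀, Or.inr (Or.inl rfl)⟩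
  push Not at hconst
  obtain ⟨i, j, hfij⟩ := hconst
  have hij : i ≠ j := fun h => hfij (h ▸ rfl)
  set b := (2 * c - 1 - f i - f j) / 2 with hb
  -- `f i + f k ≠ f j + f k` must be `c` and `c - 1` in some order, which pins down `f k`
  have hoff : ∀ k, k ≠ i → k ≠ j → f k = b := by
    intro k hki hkj
    rcases hf i k hki.symm with h | h <;> rcases hf j k hkj.symm with h' | h'
    all_goals first | linarith | exact absurd (by linarith) hfij
  obtain ⟨k, l, hkl, hki, hkj, hli, hlj⟩ := exists_pair_ne_of_four_le_card hι i j
  have hbb : 2 * b = c ∨ 2 * b = c - 1 := by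
    simpa only [hoff k hki hkj, hoff l hli hlj, two_mul] using hf k l hkl
  have hnear : ∀ m, m ≠ k → f m = b + 1 ∨ f m = b ∨ f m = b - 1 := by
    intro m hmk
    rcases hf m k hmk with h | h <;> rw [hoff k hki hkj] at h <;> rcases hbb with h' | h'
    all_goals first | (left; linarith) | (right; left; linarith) | (right; right; linarith)
  have hone : f i = b ∨ f j = b := by
    rcases hf i k hki.symm with h | h <;> rcases hf j k hkj.symm with h' | h' <;>
      rw [hoff k hki hkj] at h h' <;> rcases hbb with h'' | h''
    all_goals first | (left; linarith) | (right; linarith)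
  rcases hone with h | h
  · refine ⟨j, b, fun m hmj => ?_, hnear j hkj.symm⟩
    by_cases hmi : m = i
    · exact hmi ▸ h
    · exact hoff m hmi hmj
  · refine ⟨i, b, fun m hmi => ?_, hnear i hki.symm⟩
    by_cases hmj : m = j
    · exact hmj ▸ h
    · exact hoff m hmi hmj

end PairSums

lemma eq_nine_of_pair_sums {n : ℕ} {a b q : ℝ} (hsum : n * b + (a - b) = 2)
    (hnorm : q = n * b ^ 2 + (a ^ 2 - b ^ 2)) (hbb : b + b = q / 2 ∨ b + b = q / 2 - 1)
    (hab : a + b = q / 2 ∨ a + b = q / 2 - 1) (ha : a = b + 1 ∨ a = b ∨ a = b - 1) :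
    (n : ℝ) = 9 := by
  have hn : (0 : ℝ) ≤ n := n.cast_nonneg
  rcases ha with rfl | rfl | rfl <;> rcases hbb with hbb | hbb <;> rcases hab with hab | hab
  all_goals nlinarith

theorem johnsonRepMaximal_two {n : ℕ} (hn : 4 ≤ n) (h9 : n ≠ 9) : JohnsonRepMaximal n 2 := by
  rintro ⟨y, ⟨hyH, hyJ⟩, hy⟩
  have hD : distSet (JohnsonRep n 2 ∪ {y}) = {√2, 2} :=
    hy.distSet_eq_of_subset (distSet_johnsonRep_two hn ▸ distSet_mono Set.subset_union_left)
      (Set.ncard_pair sqrt_two_ne_two)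
  have hpair : ∀ i j, i ≠ j → y i + y j = ‖y‖ ^ 2 / 2 ∨ y i + y j = ‖y‖ ^ 2 / 2 - 1 := by
    intro i j hij
    have hmem := pairVec_mem_johnsonRep hij
    rw [← dist_pairVec_mem_iff y hij, ← hD]
    exact dist_mem_distSet (Set.mem_union_right _ rfl) (Set.mem_union_left _ hmem)
      (fun h => hyJ (h ▸ hmem))
  have hcard : 4 ≤ Fintype.card (Fin n) := by rwa [Fintype.card_fin]
  obtain ⟨i₀, b, hoff, hi₀⟩ := exists_eq_off_single_of_add_mem hcard hpair
  obtain ⟨k, l, hkl, hki, -, hli, -⟩ := exists_pair_ne_of_four_le_card hcard i₀ i₀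
  have hsum : (n : ℝ) * b + (y i₀ - b) = 2 := by
    simpa [Hyp, sum_eq_card_mul_add_of_forall_ne_eq hoff] using hyH
  have hnorm : ‖y‖ ^ 2 = n * b ^ 2 + (y i₀ ^ 2 - b ^ 2) := by
    rw [EuclideanSpace.real_norm_sq_eq, sum_eq_card_mul_add_of_forall_ne_eq (g := (y · ^ 2))
      fun k hk => by rw [hoff k hk], Fintype.card_fin]
  have hbb := hpair k l hkl
  have hab := hpair i₀ k hki.symm
  rw [hoff k hki, hoff l hli] at hbb
  rw [hoff k hki] at hab
  exact h9 (by exact_mod_cast eq_nine_of_pair_sums hsum hnorm hbb hab hi₀)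

def nineWitness : EuclideanSpace ℝ (Fin 9) :=
  WithLp.toLp 2 (fun k => if k = 0 then -2 / 3 else 1 / 3)

lemma nineWitness_mem_hyp : nineWitness ∈ Hyp 9 2 := by
  simp [Hyp, nineWitness, Fin.sum_univ_succ]
  norm_num

lemma nineWitness_not_mem_johnsonRep : nineWitness ∉ JohnsonRep 9 2 := by
  rintro ⟨h01, -⟩
  rcases h01 0 with h | h <;> norm_num [nineWitness] at h

lemma norm_sq_nineWitness : ‖nineWitness‖ ^ 2 = 4 / 3 := by
  rw [EuclideanSpace.real_norm_sq_eq]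
  simp [nineWitness, Fin.sum_univ_succ]
  norm_num

lemma dist_nineWitness_pairVec_mem {i j : Fin 9} (hij : i ≠ j) :
    dist nineWitness (pairVec i j) ∈ ({√2, 2} : Set ℝ) := by
  rw [dist_pairVec_mem_iff _ hij, norm_sq_nineWitness]
  by_cases hi : i = 0 <;> by_cases hj : j = 0 <;> simp_all [nineWitness] <;> norm_num

theorem not_johnsonRepMaximal_nine_two : ¬ JohnsonRepMaximal 9 2 := by
  rw [JohnsonRepMaximal, not_not]
  refine ⟨nineWitness, ⟨nineWitness_mem_hyp, nineWitness_not_mem_johnsonRep⟩,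
    isSDistanceSet_two_of_distSet_eq sqrt_two_ne_two ?_⟩
  have hJ := distSet_johnsonRep_two (n := 9) (by norm_num)
  refine Set.Subset.antisymm (distSet_union_singleton_subset hJ.le fun x hx _ => ?_)
    (hJ ▸ distSet_mono Set.subset_union_left)
  obtain ⟨i, j, hij, rfl⟩ := mem_johnsonRep_two_iff.mp hx
  exact dist_nineWitness_pairVec_mem hij

theorem johnsonRep_two_maximal_iff (n : ℕ) (hn : 4 ≤ n) :
    (n ≠ 9 → JohnsonRepMaximal n 2) ∧ ¬ JohnsonRepMaximal 9 2 :=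
  ⟨johnsonRepMaximal_two hn, not_johnsonRepMaximal_nine_two⟩
end
end
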